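/- Let V : (0,∞) → ℝ be C³ with V'' < 0 and V' > 0, and let V̂(y) = sup_{x>0}(V(x) - xy) be its concave conjugate-type transform with smooth inverse relation y = V'(x), x = -V̂'(y). Then (y V̂'(y) - V̂(y))'' = (ln V')''(x) / ( V''(x) · ((ln V')'(x))² ) evaluated at x with y = V'(x). In particular, since V'' < 0, the sign of (yV̂' - V̂)'' is opposite to the sign of (ln V')''; hence (yV̂'(y) - V̂(y)) strictly convex in y implies ln V'(x) strictly concave in x. -/

import Mathlib

open Set Filter Topology

/-!
On `x > 0` the defining relations give `W (V' x) = -V x`. Differentiating this identity once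
gives `W' (V' x) = -V' x / V'' x = -1 / (ln V')' x`, and once more
`W'' (V' x) = (V' V''' - V''²) / V''³`, which is the stated quotient after writing
`(ln V')' = V'' / V'` and `(ln V')'' = (V''' V' - V''²) / V'²`.
For the sign statement: strict convexity makes `W'` strictly increasing, `V'` is strictly
decreasing, so `W' ∘ V' > 0` is strictly decreasing and hence so is `(ln V')' = -1 / (W' ∘ V')`.
-/

theorem HasDerivAt.mul_eq_of_comp_eventuallyEq {f g h : ℝ → ℝ} {f' g' h' x : ℝ}
    (hf : HasDerivAt f f' (g x)) (hg : HasDerivAt g g' x) (hh : HasDerivAt h h' x)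
    (hfg : f ∘ g =ᶠ[𝓝 x] h) : f' * g' = h' :=
  (hf.comp x hg).unique (hh.congr_of_eventuallyEq hfg)

section LogDeriv

variable {f f' f'' : ℝ → ℝ} {s : Set ℝ}

theorem deriv_log_comp_eqOn (hf : ∀ x ∈ s, HasDerivAt f (f' x) x) (hf0 : ∀ x ∈ s, f x ≠ 0) :
    EqOn (deriv fun t => Real.log (f t)) (fun t => f' t / f t) s :=
  fun x hx => ((hf x hx).log (hf0 x hx)).deriv

theorem hasDerivAt_deriv_log_comp (hs : IsOpen s) (hf : ∀ x ∈ s, HasDerivAt f (f' x) x)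
    (hf' : ∀ x ∈ s, HasDerivAt f' (f'' x) x) (hf0 : ∀ x ∈ s, f x ≠ 0) {x : ℝ} (hx : x ∈ s) :
    HasDerivAt (deriv fun t => Real.log (f t)) ((f'' x * f x - f' x * f' x) / f x ^ 2) x :=
  ((hf' x hx).div (hf x hx) (hf0 x hx)).congr_of_eventuallyEq
    ((deriv_log_comp_eqOn hf hf0).eventuallyEq_of_mem (hs.mem_nhds hx))

end LogDeriv

section Dual

variable {V V1 V2 V3 W W1 W2 : ℝ → ℝ}

theorem dual_deriv_comp_eq (hV1 : ∀ x > (0:ℝ), HasDerivAt V (V1 x) x)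
    (hV2 : ∀ x > (0:ℝ), HasDerivAt V1 (V2 x) x) (hneg : ∀ x > (0:ℝ), V2 x < 0)
    (hWV : EqOn (W ∘ V1) (-V) (Ioi 0)) (hW1 : ∀ x > (0:ℝ), HasDerivAt W (W1 (V1 x)) (V1 x))
    {x : ℝ} (hx : 0 < x) : W1 (V1 x) = -V1 x / V2 x := by
  rw [eq_div_iff (hneg x hx).ne]
  exact (hW1 x hx).mul_eq_of_comp_eventuallyEq (hV2 x hx) (hV1 x hx).neg
    (hWV.eventuallyEq_of_mem (Ioi_mem_nhds hx))

theorem dual_deriv_deriv_comp_eq (hV2 : ∀ x > (0:ℝ), HasDerivAt V1 (V2 x) x)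
    (hV3 : ∀ x > (0:ℝ), HasDerivAt V2 (V3 x) x) (hneg : ∀ x > (0:ℝ), V2 x < 0)
    (hW1V : ∀ x > (0:ℝ), W1 (V1 x) = -V1 x / V2 x)
    (hW2 : ∀ x > (0:ℝ), HasDerivAt W1 (W2 (V1 x)) (V1 x)) {x : ℝ} (hx : 0 < x) :
    W2 (V1 x) = (V1 x * V3 x - V2 x ^ 2) / V2 x ^ 3 := by
  have hV2x := (hneg x hx).ne
  have h := (hW2 x hx).mul_eq_of_comp_eventuallyEq (hV2 x hx)
    ((hV2 x hx).neg.div (hV3 x hx) hV2x)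
    (eventually_of_mem (Ioi_mem_nhds hx) fun t ht => hW1V t ht)
  rw [Pi.neg_apply] at h
  field_simp at h ⊢
  linear_combination h

theorem strictConcaveOn_log_of_strictConvexOn_dual
    (hV2 : ∀ x > (0:ℝ), HasDerivAt V1 (V2 x) x) (hpos : ∀ x > (0:ℝ), 0 < V1 x)
    (hneg : ∀ x > (0:ℝ), V2 x < 0) (hW1 : ∀ x > (0:ℝ), HasDerivAt W (W1 (V1 x)) (V1 x))
    (hW1V : ∀ x > (0:ℝ), W1 (V1 x) = -V1 x / V2 x) (hconv : StrictConvexOn ℝ (V1 '' Ioi 0) W) :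
    StrictConcaveOn ℝ (Ioi 0) fun x => Real.log (V1 x) := by
  have hV1_anti : StrictAntiOn V1 (Ioi 0) :=
    strictAntiOn_of_hasDerivWithinAt_neg (convex_Ioi 0)
      (fun x hx => (hV2 x hx).continuousAt.continuousWithinAt)
      (fun x hx => (hV2 x (interior_subset hx)).hasDerivWithinAt)
      (fun x hx => hneg x (interior_subset hx))
  have hW'_mono : StrictMonoOn (deriv W) (V1 '' Ioi 0) :=
    hconv.strictMonoOn_deriv (by rintro _ ⟨x, hx, rfl⟩; exact (hW1 x hx).differentiableAt)
  have hW'_pos : ∀ x > (0:ℝ), 0 < W1 (V1 x) := fun x hx => by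
    rw [hW1V x hx]; exact div_pos_of_neg_of_neg (neg_lt_zero.2 (hpos x hx)) (hneg x hx)
  have hderiv_log : EqOn (deriv fun x => Real.log (V1 x)) (fun x => -(W1 (V1 x))⁻¹) (Ioi 0) := by
    intro x hx
    have hV2x := (hneg x hx).ne
    have hV1x := (hpos x hx).ne'
    rw [deriv_log_comp_eqOn hV2 (fun x hx => (hpos x hx).ne') hx]
    simp only [hW1V x hx]
    field_simp
  have hderiv_log_anti : StrictAntiOn (deriv fun x => Real.log (V1 x)) (Ioi 0) := by
    intro a ha b hb hab
    have hW'_lt : W1 (V1 b) < W1 (V1 a) := by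
      simpa only [Function.comp_apply, (hW1 a ha).deriv, (hW1 b hb).deriv] using
        (hW'_mono.comp_strictAntiOn hV1_anti (mapsTo_image V1 _)) ha hb hab
    rw [hderiv_log ha, hderiv_log hb, neg_lt_neg_iff]
    exact inv_strictAnti₀ (hW'_pos b hb) hW'_lt
  refine StrictAntiOn.strictConcaveOn_of_deriv (convex_Ioi 0)
    (fun x hx => ((hV2 x hx).log (hpos x hx).ne').continuousAt.continuousWithinAt) ?_
  rwa [interior_Ioi]

end Dual

theorem risk_aversion_duality_identity_general
    (V V1 V2 V3 Vh Vh1 W W1 W2 : ℝ → ℝ)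
    (hV1 : ∀ x > (0:ℝ), HasDerivAt V (V1 x) x)
    (hV2 : ∀ x > (0:ℝ), HasDerivAt V1 (V2 x) x)
    (hV3 : ∀ x > (0:ℝ), HasDerivAt V2 (V3 x) x)
    (hpos : ∀ x > (0:ℝ), 0 < V1 x)
    (hneg : ∀ x > (0:ℝ), V2 x < 0)
    (hVh : ∀ x > (0:ℝ), Vh (V1 x) = V x - x * V1 x)
    (hVh1 : ∀ x > (0:ℝ), Vh1 (V1 x) = -x)
    (hW : ∀ y, W y = y * Vh1 y - Vh y)
    (hW1 : ∀ x > (0:ℝ), HasDerivAt W (W1 (V1 x)) (V1 x))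
    (hW2 : ∀ x > (0:ℝ), HasDerivAt W1 (W2 (V1 x)) (V1 x))
    (L : ℝ → ℝ) (hL : ∀ x, L x = Real.log (V1 x)) :
    (∀ x > (0:ℝ), W2 (V1 x) = deriv (deriv L) x / (V2 x * (deriv L x) ^ 2)) ∧
    (StrictConvexOn ℝ (V1 '' Ioi 0) W → StrictConcaveOn ℝ (Ioi 0) L) := by
  obtain rfl : L = fun x => Real.log (V1 x) := funext hL
  have hV1_ne : ∀ x ∈ Ioi (0:ℝ), V1 x ≠ 0 := fun x hx => (hpos x hx).ne'
  have hWV : EqOn (W ∘ V1) (-V) (Ioi 0) := fun x hx => by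
    simp only [Function.comp_apply, Pi.neg_apply, hW, hVh1 x hx, hVh x hx]
    ring
  have hW1V : ∀ x > (0:ℝ), W1 (V1 x) = -V1 x / V2 x :=
    fun x hx => dual_deriv_comp_eq hV1 hV2 hneg hWV hW1 hx
  refine ⟨fun x hx => ?_, strictConcaveOn_log_of_strictConvexOn_dual hV2 hpos hneg hW1 hW1V⟩
  rw [dual_deriv_deriv_comp_eq hV2 hV3 hneg hW1V hW2 hx,
    (hasDerivAt_deriv_log_comp isOpen_Ioi hV2 hV3 hV1_ne hx).deriv,
    deriv_log_comp_eqOn hV2 hV1_ne hx]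
  have hV2x := (hneg x hx).ne
  have hV1x := hV1_ne x hx
  field_simp

/-- Let `V` be `C³` with `V' > 0`, `V'' < 0` on `(0,∞)` and let `V̂` be its dual with
`V̂(V'(x)) = V(x) - x V'(x)` and `V̂'(V'(x)) = -x`. For `W(y) = y V̂'(y) - V̂(y)` one has,
at `y = V'(x)`, `W''(y) = (ln V')''(x) / (V''(x) ((ln V')'(x))²)`; since `V'' < 0`, strict
convexity of `W` (on the range of `V'`) implies strict concavity of `ln V'` on `(0,∞)`. -/
theorem risk_aversion_duality_identity
    (V V1 V2 V3 Vh Vh1 W W1 W2 : ℝ → ℝ)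
    (hV1 : ∀ x > (0:ℝ), HasDerivAt V (V1 x) x)
    (hV2 : ∀ x > (0:ℝ), HasDerivAt V1 (V2 x) x)
    (hV3 : ∀ x > (0:ℝ), HasDerivAt V2 (V3 x) x)
    (hV3c : ContinuousOn V3 (Ioi 0))
    (hpos : ∀ x > (0:ℝ), 0 < V1 x)
    (hneg : ∀ x > (0:ℝ), V2 x < 0)
    (hVh : ∀ x > (0:ℝ), Vh (V1 x) = V x - x * V1 x)
    (hVh1 : ∀ x > (0:ℝ), Vh1 (V1 x) = -x)
    (hW : ∀ y, W y = y * Vh1 y - Vh y)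
    (hW1 : ∀ x > (0:ℝ), HasDerivAt W (W1 (V1 x)) (V1 x))
    (hW2 : ∀ x > (0:ℝ), HasDerivAt W1 (W2 (V1 x)) (V1 x))
    (L : ℝ → ℝ) (hL : ∀ x, L x = Real.log (V1 x)) :
    (∀ x > (0:ℝ), W2 (V1 x) = deriv (deriv L) x / (V2 x * (deriv L x) ^ 2)) ∧
    (StrictConvexOn ℝ (V1 '' Ioi 0) W → StrictConcaveOn ℝ (Ioi 0) L) :=
  risk_aversion_duality_identity_general V V1 V2 V3 Vh Vh1 W W1 W2 hV1 hV2 hV3 hpos hneg hVh hVh1 hW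
    hW1 hW2 L hL
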